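/- The e-core of a partition is well-defined: successively removing e-rim hooks from a partition λ in any order until no e-rim hook can be removed always yields the same partition, the e-core of λ. -/

import Mathlib

noncomputable section

/-- A partition: a weakly decreasing sequence of natural numbers with finite support.
Rows and columns are indexed from `0`. -/
structure Partition' where
  parts : ℕ → ℕ
  antitone : ∀ ⦃i j : ℕ⦄, i ≤ j → parts j ≤ parts i
  finite_support : ∃ N, ∀ i, N ≤ i → parts i = 0

namespace Partition'

/-- The Young diagram of a partition: cells `(i, j)` with `j < λ_i` (0-indexed). -/
def cells (p : Partition') : Set (ℕ × ℕ) := {x | x.2 < p.parts x.1}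

/-- The size `|λ|` of a partition. -/
def size (p : Partition') : ℕ := p.cells.ncard

/-- Two cells are adjacent if they share an edge. -/
def adjacent (a b : ℕ × ℕ) : Prop :=
  (a.1 = b.1 ∧ (a.2 + 1 = b.2 ∨ b.2 + 1 = a.2)) ∨
  (a.2 = b.2 ∧ (a.1 + 1 = b.1 ∨ b.1 + 1 = a.1))

/-- A set of cells is (edge-)connected. -/
def ConnectedSet (S : Set (ℕ × ℕ)) : Prop :=
  ∀ a ∈ S, ∀ b ∈ S, ∃ (n : ℕ) (f : ℕ → ℕ × ℕ),
    f 0 = a ∧ f n = b ∧ (∀ k < n, adjacent (f k) (f (k + 1))) ∧ (∀ k ≤ n, f k ∈ S)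

/-- A set of cells contains no 2×2 square. -/
def No2x2 (S : Set (ℕ × ℕ)) : Prop :=
  ∀ i j : ℕ, ¬ ((i, j) ∈ S ∧ (i + 1, j) ∈ S ∧ (i, j + 1) ∈ S ∧ (i + 1, j + 1) ∈ S)

/-- `AddRimHook p q h` : the partition `q` is obtained from `p` by wrapping on
(a connected skew shape of size `h` containing no 2×2 square, i.e.) a rim hook of length `h`. -/
def AddRimHook (p q : Partition') (h : ℕ) : Prop :=
  p.cells ⊆ q.cells ∧ (q.cells \ p.cells).ncard = h ∧
    ConnectedSet (q.cells \ p.cells) ∧ No2x2 (q.cells \ p.cells)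

/-- The length `λ'_j` of column `j` (0-indexed) of a partition. -/
def colLen (p : Partition') (j : ℕ) : ℕ := {i : ℕ | (i, j) ∈ p.cells}.ncard

/-- The rim hook `r^λ_x` attached to the node `x = (i,j)` of `λ`. -/
def rimHook (p : Partition') (i j : ℕ) : Set (ℕ × ℕ) :=
  {y ∈ p.cells | i ≤ y.1 ∧ j ≤ y.2 ∧ (y.1 + 1, y.2 + 1) ∉ p.cells}

/-- The leg length of the rim hook `r^λ_{(i,j)}`. -/
def legLength (p : Partition') (i j : ℕ) : ℕ := p.colLen j - 1 - i

/-- The hook length `h^λ_{(i,j)}` of the node `(i,j) ∈ [λ]` (0-indexed). -/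
def hookLen (p : Partition') (i j : ℕ) : ℕ := p.parts i + p.colLen j - i - j - 1

/-- The residue mod `e` of the foot node of a rim hook `r^λ_{(i,j)}`; the foot node is
`(λ'_j - 1, j)` (0-indexed), so its residue is `j - λ'_j + 1 = (j+1) - λ'_j` mod `e`. -/
def footRes (e : ℕ) (p : Partition') (j : ℕ) : ZMod e :=
  (((j : ℤ) + 1 - p.colLen j : ℤ) : ZMod e)

/-- `C_f(λ)` : the number of nodes of `λ` with residue `f` mod `e`, using charge `c`
(the residue of node `(i,j)` (0-indexed) is `j - i + c` mod `e`). -/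
def resCount (e : ℕ) (c : ℤ) (p : Partition') (f : ZMod e) : ℕ :=
  {x ∈ p.cells | (((x.2 : ℤ) - x.1 + c : ℤ) : ZMod e) = f}.ncard

/-- The set of β-numbers of `p` with charge `c` : `β_i = λ_i - i + c` (1-indexed rows). -/
def betaSet (p : Partition') (c : ℤ) : Set ℤ :=
  {z | ∃ i : ℕ, z = (p.parts i : ℤ) - (i + 1) + c}

/-- The dominance order on partitions. -/
def Dominates (p q : Partition') : Prop :=
  ∀ m : ℕ, ∑ i ∈ Finset.range m, q.parts i ≤ ∑ i ∈ Finset.range m, p.parts i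

end Partition'

/-!
Encode a partition `λ` by its β-numbers `λ_i - i`, a strictly decreasing sequence of integers.
Removing an `e`-rim hook occupying rows `a, …, b` deletes the β-number `x = λ_a - a` and inserts
`x - e`, which is not yet a β-number; conversely every such move is realised by a rim-hook
removal. Two different moves of this kind commute, so single removals have the diamond property
and, by Church–Rosser, every maximal sequence of removals ends at the same partition.
-/

theorem Relation.eq_of_reflTransGen_of_diamond {α : Type*} {r : α → α → Prop}
    (hr : ∀ a b c, r a b → r a c → b = c ∨ ∃ d, r b d ∧ r c d) {a b c : α}
    (hab : Relation.ReflTransGen r a b) (hac : Relation.ReflTransGen r a c)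
    (hb : ∀ d, ¬ r b d) (hc : ∀ d, ¬ r c d) : b = c := by
  have hconfluent : ∀ a b c, r a b → r a c →
      ∃ d, Relation.ReflGen r b d ∧ Relation.ReflTransGen r c d := by
    intro a b c hab hac
    obtain rfl | ⟨d, hbd, hcd⟩ := hr a b c hab hac
    · exact ⟨b, .refl, .refl⟩
    · exact ⟨d, .single hbd, .single hcd⟩
  obtain ⟨d, hbd, hcd⟩ := Relation.church_rosser hconfluent hab hac
  have hnormal : ∀ {x}, (∀ y, ¬ r x y) → Relation.ReflTransGen r x d → x = d := fun hx hxd =>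
    (Relation.ReflTransGen.cases_head_iff.1 hxd).resolve_right fun ⟨y, hxy, _⟩ => hx y hxy
  exact (hnormal hb hbd).trans (hnormal hc hcd).symm

namespace Partition'

/-- `g` is `f` with the entry at index `a` deleted and a new entry inserted at index `b`. -/
structure IsBeadMove (f g : ℕ → ℤ) (a b : ℕ) : Prop where
  le : a ≤ b
  eq_of_lt : ∀ i < a, g i = f i
  eq_succ : ∀ i, a ≤ i → i < b → g i = f (i + 1)
  eq_of_gt : ∀ i, b < i → g i = f i
  lt : g b < f b

theorem IsBeadMove.range_eq {f g : ℕ → ℤ} {a b : ℕ} (h : IsBeadMove f g a b)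
    (hf : StrictAnti f) (hg : StrictAnti g) :
    g b ∉ Set.range f ∧ Set.range g = insert (g b) (Set.range f \ {f a}) := by
  have hab := h.le
  have hb := h.lt
  constructor
  · rintro ⟨j, hj⟩
    rcases lt_or_ge b j with hbj | hjb
    · have := hg hbj
      linarith [h.eq_of_gt j hbj]
    · have := hf.antitone hjb
      linarith
  ext z
  simp only [Set.mem_insert_iff, Set.mem_sdiff, Set.mem_range, Set.mem_singleton_iff]
  constructor
  · rintro ⟨i, rfl⟩
    have hfa : ∀ {j}, j ≠ a → f j ≠ f a := hf.injective.ne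
    rcases lt_or_ge i a with hia | hai
    · rw [h.eq_of_lt i hia]
      exact .inr ⟨⟨i, rfl⟩, hfa hia.ne⟩
    rcases lt_trichotomy i b with hib | rfl | hbi
    · rw [h.eq_succ i hai hib]
      exact .inr ⟨⟨i + 1, rfl⟩, hfa (by omega)⟩
    · exact .inl rfl
    · rw [h.eq_of_gt i hbi]
      exact .inr ⟨⟨i, rfl⟩, hfa (by omega)⟩
  · rintro (rfl | ⟨⟨j, rfl⟩, hja⟩)
    · exact ⟨b, rfl⟩
    have hja : j ≠ a := fun hc => hja (hc ▸ rfl)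
    rcases lt_or_ge j a with hj | hj
    · exact ⟨j, h.eq_of_lt j hj⟩
    rcases lt_or_ge b j with hbj | hjb
    · exact ⟨j, h.eq_of_gt j hbj⟩
    · refine ⟨j - 1, ?_⟩
      rw [h.eq_succ (j - 1) (by omega) (by omega), Nat.sub_add_cancel (by omega)]

theorem exists_isBeadMove {f : ℕ → ℤ} (hf : StrictAnti f) {a : ℕ} {y : ℤ} (hya : y < f a)
    (hyf : y ∉ Set.range f) (hbelow : ∃ i, f i < y) :
    ∃ b g, IsBeadMove f g a b ∧ StrictAnti g ∧ g b = y := by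
  -- `y` is inserted at the first index `b ≥ a` with `f (b + 1) < y`.
  have hex : ∃ b, a ≤ b ∧ f (b + 1) < y := by
    obtain ⟨i, hi⟩ := hbelow
    exact ⟨max a i, le_max_left _ _, (hf.antitone (by omega)).trans_lt hi⟩
  obtain ⟨b, ⟨hab, hby⟩, hmin⟩ :
      ∃ b, (a ≤ b ∧ f (b + 1) < y) ∧ ∀ c < b, ¬ (a ≤ c ∧ f (c + 1) < y) :=
    ⟨Nat.find hex, Nat.find_spec hex, fun _ => Nat.find_min hex⟩
  have hyb : ∀ i ≤ b, y < f i := by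
    suffices y < f b from fun i hi => this.trans_le (hf.antitone hi)
    rcases hab.eq_or_lt with rfl | hab
    · exact hya
    · have := hmin (b - 1) (by omega)
      rw [Nat.sub_add_cancel (by omega)] at this
      exact lt_of_le_of_ne (by omega) fun hc => hyf ⟨b, hc.symm⟩
  have hyb' : ∀ i, b < i → f i < y := fun i hi => (hf.antitone hi).trans_lt hby
  refine ⟨b, fun i => if i < a ∨ b < i then f i else if i < b then f (i + 1) else y,
    ⟨hab, ?_, ?_, ?_, ?_⟩, ?_, ?_⟩
  · intro i hi
    exact if_pos (.inl hi)
  · intro i hai hib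
    rw [if_neg (by omega), if_pos hib]
  · intro i hi
    exact if_pos (.inr hi)
  · simp only [lt_irrefl, or_false, not_lt.2 hab, if_false]
    exact hyb b le_rfl
  · refine strictAnti_nat_of_succ_lt fun n => ?_
    have h1 := hf (show n < n + 1 by omega)
    have h2 := hf (show n + 1 < n + 1 + 1 by omega)
    by_cases hn : n ≤ b
    · have := hyb n hn
      by_cases hn' : b < n + 1
      · have := hyb' (n + 1) hn'
        split_ifs <;> omega
      · have := hyb (n + 1) (by omega)
        split_ifs <;> omega
    · have := hyb' n (by omega)
      split_ifs <;> omega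
  · simp [not_lt.2 hab]

section Grid

variable {S : Set (ℕ × ℕ)}

theorem adjacent_symm {u v : ℕ × ℕ} (h : adjacent u v) : adjacent v u := by
  unfold adjacent at *
  tauto

def ReachIn (S : Set (ℕ × ℕ)) : ℕ × ℕ → ℕ × ℕ → Prop :=
  Relation.ReflTransGen fun u v => adjacent u v ∧ u ∈ S ∧ v ∈ S

theorem ReachIn.symm {u v : ℕ × ℕ} (h : ReachIn S u v) : ReachIn S v u := by
  induction h with
  | refl => exact .refl
  | tail _ hvw ih => exact .head ⟨adjacent_symm hvw.1, hvw.2.2, hvw.2.1⟩ ih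

theorem connectedSet_iff : ConnectedSet S ↔ ∀ u ∈ S, ∀ v ∈ S, ReachIn S u v := by
  constructor
  · intro hS u hu v hv
    obtain ⟨n, f, rfl, rfl, hadj, hmem⟩ := hS u hu v hv
    suffices ∀ k ≤ n, ReachIn S (f 0) (f k) from this n le_rfl
    intro k
    induction k with
    | zero => exact fun _ => .refl
    | succ k ih =>
      exact fun hk => .tail (ih (by omega)) ⟨hadj k hk, hmem k (by omega), hmem (k + 1) hk⟩
  · intro h u hu v hv
    induction h u hu v hv with
    | refl => exact ⟨0, fun _ => u, rfl, rfl, by omega, fun _ _ => hu⟩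
    | @tail v w _ hvw ih =>
      obtain ⟨n, f, hf0, hfn, hadj, hmem⟩ := ih hvw.2.1
      refine ⟨n + 1, fun k => if k ≤ n then f k else w, by simp [hf0], by simp, ?_, ?_⟩
      · intro k hk
        rcases Nat.lt_or_ge k n with hkn | hkn
        · simpa [hkn.le, Nat.succ_le_of_lt hkn] using hadj k hkn
        · obtain rfl : k = n := by omega
          simpa [hfn] using hvw.1
      · intro k hk
        by_cases hkn : k ≤ n
        · simpa [hkn] using hmem k hkn
        · simpa [hkn] using hvw.2.2

theorem reachIn_row {i j j' : ℕ} (hjj' : j ≤ j') (h : ∀ k, j ≤ k → k ≤ j' → (i, k) ∈ S) :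
    ReachIn S (i, j) (i, j') := by
  induction j', hjj' using Nat.le_induction with
  | base => exact .refl
  | succ k hjk ih =>
    exact .tail (ih fun l hl hlk => h l hl (by omega))
      ⟨.inl ⟨rfl, .inl rfl⟩, h k hjk (by omega), h (k + 1) (by omega) le_rfl⟩

theorem ReachIn.exists_vertical_domino {u v : ℕ × ℕ} (h : ReachIn S u v) {k : ℕ}
    (hku : k < u.1) (hvk : v.1 ≤ k) : ∃ j, (k, j) ∈ S ∧ (k + 1, j) ∈ S := by
  induction h using Relation.ReflTransGen.head_induction_on with
  | refl => omega
  | @head u c huc _ ih =>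
    by_cases hkc : k < c.1
    · exact ih hkc
    obtain ⟨hadj, hu, hc⟩ := huc
    obtain ⟨u1, u2⟩ := u
    obtain ⟨c1, c2⟩ := c
    rcases hadj with ⟨h1, -⟩ | ⟨rfl, h1⟩
    · simp only at h1 hku hkc; omega
    · simp only at h1 hku hkc
      obtain rfl : c1 = k := by omega
      obtain rfl : u1 = c1 + 1 := by omega
      exact ⟨u2, hc, hu⟩

end Grid

/-- `Set.range p.beta` is `p.betaSet 1`. -/
def beta (p : Partition') (i : ℕ) : ℤ := p.parts i - i

theorem beta_strictAnti (p : Partition') : StrictAnti p.beta :=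
  strictAnti_nat_of_succ_lt fun i => by
    have := p.antitone (Nat.le_add_right i 1)
    simp only [beta]
    omega

theorem exists_beta_lt (p : Partition') (y : ℤ) : ∃ i, p.beta i < y := by
  refine ⟨(p.beta 0 - y).toNat + 1, ?_⟩
  have := p.antitone (Nat.zero_le ((p.beta 0 - y).toNat + 1))
  simp only [beta] at *
  omega

theorem eq_of_range_beta_eq {p q : Partition'} (h : Set.range p.beta = Set.range q.beta) :
    p = q := by
  have hbeta : p.beta = q.beta :=
    (StrictMono.range_inj (γ := ℤᵒᵈ) p.beta_strictAnti q.beta_strictAnti).1 h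
  have hparts : p.parts = q.parts := funext fun i => by
    have := congrFun hbeta i
    simp only [beta] at this
    omega
  cases p; cases q; cases hparts; rfl

theorem exists_beta_eq {g : ℕ → ℤ} (hg : StrictAnti g) {N : ℕ} (hN : ∀ i, N ≤ i → g i = -i) :
    ∃ p : Partition', p.beta = g := by
  have hanti : Antitone fun i => g i + i :=
    antitone_nat_of_succ_le fun i => by
      have := hg (Nat.lt_add_one i)
      push_cast
      omega
  have hnonneg : ∀ i, 0 ≤ g i + i := fun i => by
    have := hanti (le_max_left i N)
    have := hN (max i N) (le_max_right i N)
    simp only at *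
    omega
  refine ⟨⟨fun i => (g i + i).toNat, fun i j hij => Int.toNat_le_toNat (hanti hij),
    N, fun i hi => by simp [hN i hi]⟩, funext fun i => ?_⟩
  have := hnonneg i
  simp only [beta]
  omega

theorem mem_cells_diff {p q : Partition'} {x : ℕ × ℕ} :
    x ∈ q.cells \ p.cells ↔ p.parts x.1 ≤ x.2 ∧ x.2 < q.parts x.1 := by
  simp only [Set.mem_sdiff, cells, Set.mem_ofPred_eq]
  omega

theorem parts_le_of_cells_subset {p q : Partition'} (h : p.cells ⊆ q.cells) (i : ℕ) :
    p.parts i ≤ q.parts i := by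
  by_contra hc
  have : (i, q.parts i) ∈ q.cells := h (show q.parts i < p.parts i by omega)
  exact lt_irrefl _ (show q.parts i < q.parts i from this)

theorem ncard_cells_diff {p q : Partition'} {s : Finset ℕ}
    (hs : ∀ i, p.parts i < q.parts i → i ∈ s) :
    (q.cells \ p.cells).ncard = ∑ i ∈ s, (q.parts i - p.parts i) := by
  have hset : q.cells \ p.cells =
      ↑(s.biUnion fun i => ({i} : Finset ℕ) ×ˢ Finset.Ico (p.parts i) (q.parts i)) := by
    ext ⟨i, j⟩
    simp only [mem_cells_diff, Finset.coe_biUnion, Finset.mem_coe, Finset.mem_product,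
      Finset.mem_singleton, Finset.mem_Ico, Set.mem_iUnion, exists_prop]
    constructor
    · rintro ⟨h1, h2⟩
      exact ⟨i, hs i (by omega), rfl, h1, h2⟩
    · rintro ⟨k, -, rfl, h⟩
      exact h
  rw [hset, Set.ncard_coe_finset, Finset.card_biUnion]
  · simp
  · intro i _ j _ hij
    simp only [Finset.disjoint_left, Finset.mem_product, Finset.mem_singleton]
    rintro ⟨k, l⟩ ⟨rfl, -⟩ ⟨rfl, -⟩
    exact hij rfl

theorem no2x2_cells_diff_iff {p q : Partition'} :
    No2x2 (q.cells \ p.cells) ↔ ∀ i, q.parts (i + 1) ≤ p.parts i + 1 := by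
  simp only [No2x2, mem_cells_diff]
  constructor
  · intro h i
    by_contra hc
    have := q.antitone (Nat.le_add_right i 1)
    have := p.antitone (Nat.le_add_right i 1)
    exact h i (p.parts i) (by omega)
  · intro h i j
    have := h i
    omega

variable {p q : Partition'} {e : ℕ}

namespace IsBeadMove

variable {a b : ℕ} (h : IsBeadMove q.beta p.beta a b)
include h

theorem parts_eq {i : ℕ} (hi : i < a ∨ b < i) : p.parts i = q.parts i := by
  have := hi.elim (h.eq_of_lt i) (h.eq_of_gt i)
  simp only [beta] at this
  omega

theorem parts_succ {i : ℕ} (hai : a ≤ i) (hib : i < b) : q.parts (i + 1) = p.parts i + 1 := by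
  have := h.eq_succ i hai hib
  simp only [beta] at this
  omega

theorem parts_lt : p.parts b < q.parts b := by
  have := h.lt
  simp only [beta] at this
  omega

theorem parts_le (i : ℕ) : p.parts i ≤ q.parts i := by
  rcases lt_or_ge i a with hia | hai
  · exact (h.parts_eq (.inl hia)).le
  rcases lt_trichotomy i b with hib | rfl | hbi
  · have := q.antitone (Nat.le_add_right i 1)
    have := h.parts_succ hai hib
    omega
  · exact h.parts_lt.le
  · exact (h.parts_eq (.inr hbi)).le

theorem mem_Icc_of_parts_lt {i : ℕ} (hi : p.parts i < q.parts i) : i ∈ Finset.Icc a b := by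
  rw [Finset.mem_Icc]
  by_contra hc
  have := h.parts_eq (i := i) (by omega)
  omega

theorem ncard_cells_diff : ((q.cells \ p.cells).ncard : ℤ) = q.beta a - p.beta b := by
  rw [Partition'.ncard_cells_diff fun i => h.mem_Icc_of_parts_lt, Nat.cast_sum]
  calc ∑ i ∈ Finset.Icc a b, ((q.parts i - p.parts i : ℕ) : ℤ)
      = ∑ i ∈ Finset.Ico a b, (q.beta i - q.beta (i + 1)) + (q.beta b - p.beta b) := by
        rw [← Finset.Ico_add_one_right_eq_Icc, Finset.sum_Ico_succ_top h.le]
        congr 1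
        · refine Finset.sum_congr rfl fun i hi => ?_
          rw [Finset.mem_Ico] at hi
          have := h.parts_succ hi.1 hi.2
          have := h.parts_le i
          simp only [beta]
          omega
        · have := h.parts_lt
          simp only [beta]
          omega
    _ = q.beta a - p.beta b := by
        have := Finset.sum_Ico_sub (f := q.beta) h.le
        rw [Finset.sum_sub_distrib] at *
        linarith

theorem no2x2 : No2x2 (q.cells \ p.cells) := by
  refine no2x2_cells_diff_iff.2 fun i => ?_
  have := q.antitone (Nat.le_add_right i 1)
  rcases lt_or_ge i a with hia | hai
  · rw [h.parts_eq (.inl hia)]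
    omega
  rcases lt_trichotomy i b with hib | rfl | hbi
  · rw [h.parts_succ hai hib]
  · have h1 := h.eq_of_gt (i + 1) (by omega)
    have h2 := p.beta_strictAnti (Nat.lt_add_one i)
    simp only [beta] at h1 h2
    omega
  · rw [h.parts_eq (.inr hbi)]
    omega

theorem connectedSet : ConnectedSet (q.cells \ p.cells) := by
  set S := q.cells \ p.cells
  have hrow : ∀ i j, (i, j) ∈ S → ReachIn S (i, j) (i, p.parts i) := by
    intro i j hij
    rw [mem_cells_diff] at hij
    simp only at hij
    exact (reachIn_row hij.1 fun k hk hkj => mem_cells_diff.2 ⟨hk, by simp only; omega⟩).symm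
  have hdown : ∀ m i, i + m = b → a ≤ i → ReachIn S (i, p.parts i) (b, p.parts b) := by
    intro m
    induction m with
    | zero => intro i hi _; obtain rfl : i = b := hi; exact .refl
    | succ m ih =>
      intro i hi hai
      have hsucc := h.parts_succ hai (by omega)
      have hanti := p.antitone (Nat.le_add_right i 1)
      have hbelow : (i + 1, p.parts i) ∈ S := mem_cells_diff.2 ⟨hanti, by simp only; omega⟩
      have hstart : (i, p.parts i) ∈ S := by
        have := q.antitone (Nat.le_add_right i 1)
        exact mem_cells_diff.2 ⟨le_rfl, by simp only; omega⟩
      have hstep : adjacent (i, p.parts i) (i + 1, p.parts i) := .inr ⟨rfl, .inl rfl⟩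
      exact .head ⟨hstep, hstart, hbelow⟩
        ((hrow _ _ hbelow).trans (ih (i + 1) (by omega) (by omega)))
  have hreach : ∀ u ∈ S, ReachIn S u (b, p.parts b) := by
    rintro ⟨i, j⟩ hu
    obtain ⟨hij, hjq⟩ := mem_cells_diff.1 hu
    have hi := Finset.mem_Icc.1 (h.mem_Icc_of_parts_lt (hij.trans_lt hjq))
    exact (hrow i j hu).trans (hdown (b - i) i (by omega) hi.1)
  exact connectedSet_iff.2 fun u hu v hv => (hreach u hu).trans (hreach v hv).symm

theorem addRimHook (he : q.beta a - p.beta b = e) : AddRimHook p q e :=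
  ⟨fun x hx => lt_of_lt_of_le hx (h.parts_le x.1), by have := h.ncard_cells_diff; omega,
    h.connectedSet, h.no2x2⟩

end IsBeadMove

theorem parts_succ_eq_of_connectedSet (hconn : ConnectedSet (q.cells \ p.cells))
    (hsq : No2x2 (q.cells \ p.cells)) {a b k : ℕ} (ha : p.parts a < q.parts a)
    (hb : p.parts b < q.parts b) (hak : a ≤ k) (hkb : k < b) :
    q.parts (k + 1) = p.parts k + 1 := by
  have hreach := connectedSet_iff.1 hconn (b, p.parts b) (mem_cells_diff.2 ⟨le_rfl, hb⟩)
    (a, p.parts a) (mem_cells_diff.2 ⟨le_rfl, ha⟩)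
  obtain ⟨j, hkj, hk1j⟩ := hreach.exists_vertical_domino hkb hak
  rw [mem_cells_diff] at hkj hk1j
  have := no2x2_cells_diff_iff.1 hsq k
  simp only at hkj hk1j
  omega

theorem AddRimHook.exists_isBeadMove (he : 0 < e) (h : AddRimHook p q e) :
    ∃ a b, IsBeadMove q.beta p.beta a b ∧ q.beta a - p.beta b = e := by
  obtain ⟨hsub, hcard, hconn, hsq⟩ := h
  have hle := parts_le_of_cells_subset hsub
  obtain ⟨N, hN⟩ := q.finite_support
  set R := (Finset.range N).filter fun i => p.parts i < q.parts i
  have hR : ∀ i, p.parts i < q.parts i → i ∈ R := fun i hi => by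
    refine Finset.mem_filter.2 ⟨Finset.mem_range.2 ?_, hi⟩
    by_contra hiN
    have := hN i (by omega)
    omega
  have hne : R.Nonempty := by
    rw [Finset.nonempty_iff_ne_empty]
    intro hR0
    rw [ncard_cells_diff hR, hR0, Finset.sum_empty] at hcard
    omega
  have ha := (Finset.mem_filter.1 (R.min'_mem hne)).2
  have hb := (Finset.mem_filter.1 (R.max'_mem hne)).2
  have hrows : ∀ i, p.parts i < q.parts i → R.min' hne ≤ i ∧ i ≤ R.max' hne :=
    fun i hi => ⟨R.min'_le i (hR i hi), R.le_max' i (hR i hi)⟩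
  have hout : ∀ i, i < R.min' hne ∨ R.max' hne < i → p.parts i = q.parts i := fun i hi => by
    have := hle i
    have := hrows i
    omega
  have hmove : IsBeadMove q.beta p.beta (R.min' hne) (R.max' hne) := by
    refine ⟨(hrows _ hb).1, fun i hi => ?_, fun i hai hib => ?_, fun i hi => ?_, ?_⟩
    all_goals simp only [beta]
    · rw [hout i (.inl hi)]
    · rw [parts_succ_eq_of_connectedSet hconn hsq ha hb hai hib]
      push_cast
      ring
    · rw [hout i (.inr hi)]
    · omega
  refine ⟨_, _, hmove, ?_⟩
  rw [← hmove.ncard_cells_diff, hcard]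

theorem AddRimHook.exists_range_beta_eq (he : 0 < e) (h : AddRimHook p q e) :
    ∃ x ∈ Set.range q.beta, x - e ∉ Set.range q.beta ∧
      Set.range p.beta = insert (x - e) (Set.range q.beta \ {x}) := by
  obtain ⟨a, b, hmove, hsize⟩ := h.exists_isBeadMove he
  obtain ⟨hnew, hrange⟩ := hmove.range_eq q.beta_strictAnti p.beta_strictAnti
  rw [show p.beta b = q.beta a - e by omega] at hnew hrange
  exact ⟨q.beta a, ⟨a, rfl⟩, hnew, hrange⟩

theorem exists_addRimHook_of_mem_range_beta (he : 0 < e) {x : ℤ} (hx : x ∈ Set.range q.beta)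
    (hxe : x - e ∉ Set.range q.beta) :
    ∃ p, AddRimHook p q e ∧ Set.range p.beta = insert (x - e) (Set.range q.beta \ {x}) := by
  obtain ⟨a, rfl⟩ := hx
  obtain ⟨b, g, hmove, hg, hgb⟩ :=
    exists_isBeadMove q.beta_strictAnti (a := a) (by omega) hxe (q.exists_beta_lt _)
  obtain ⟨N, hN⟩ := q.finite_support
  obtain ⟨p, rfl⟩ := exists_beta_eq hg (N := max N (b + 1)) fun i hi => by
    rw [hmove.eq_of_gt i (by omega)]
    simp [beta, hN i (by omega)]
  refine ⟨p, hmove.addRimHook (by omega), ?_⟩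
  rw [(hmove.range_eq q.beta_strictAnti hg).2, hgb]

theorem addRimHook_diamond (he : 0 < e) {u v w : Partition'} (hv : AddRimHook v u e)
    (hw : AddRimHook w u e) : v = w ∨ ∃ d, AddRimHook d v e ∧ AddRimHook d w e := by
  obtain ⟨x, hx, hxe, hvB⟩ := hv.exists_range_beta_eq he
  obtain ⟨y, hy, hye, hwB⟩ := hw.exists_range_beta_eq he
  by_cases hxy : x = y
  · subst hxy
    exact .inl (eq_of_range_beta_eq (hvB.trans hwB.symm))
  right
  have hyx : y ≠ x - e := fun h => hxe (h ▸ hy)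
  have hxy' : x ≠ y - e := fun h => hye (h ▸ hx)
  obtain ⟨d, hdv, hdB⟩ := exists_addRimHook_of_mem_range_beta (q := v) he (x := y)
    (by rw [hvB]; exact .inr ⟨hy, Ne.symm hxy⟩)
    (by rw [hvB]; rintro (h | ⟨h, -⟩) <;> [omega; exact hye h])
  obtain ⟨d', hdw, hd'B⟩ := exists_addRimHook_of_mem_range_beta (q := w) he (x := x)
    (by rw [hwB]; exact .inr ⟨hx, hxy⟩)
    (by rw [hwB]; rintro (h | ⟨h, -⟩) <;> [omega; exact hxe h])
  obtain rfl : d = d' := by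
    refine eq_of_range_beta_eq ?_
    rw [hdB, hd'B, hvB, hwB]
    ext z
    simp only [Set.mem_insert_iff, Set.mem_sdiff, Set.mem_singleton_iff]
    constructor
    · rintro (rfl | ⟨rfl | ⟨hz, hzx⟩, hzy⟩)
      · exact .inr ⟨.inl rfl, hxy'.symm⟩
      · exact .inl rfl
      · exact .inr ⟨.inr ⟨hz, hzy⟩, hzx⟩
    · rintro (rfl | ⟨rfl | ⟨hz, hzy⟩, hzx⟩)
      · exact .inr ⟨.inl rfl, hyx.symm⟩
      · exact .inl rfl
      · exact .inr ⟨.inr ⟨hz, hzx⟩, hzy⟩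
  exact ⟨d, hdv, hdw⟩

end Partition'

/-- The `e`-core is well defined: successively removing `e`-rim hooks from `λ` in any order
until none can be removed always yields the same partition. -/
theorem stmt8 (e : ℕ) (he : 2 ≤ e) (p q q' : Partition')
    (h1 : Relation.ReflTransGen (fun a b => Partition'.AddRimHook b a e) p q)
    (h2 : Relation.ReflTransGen (fun a b => Partition'.AddRimHook b a e) p q')
    (hq : ¬ ∃ s, Partition'.AddRimHook s q e)
    (hq' : ¬ ∃ s, Partition'.AddRimHook s q' e) :
    q = q' :=
  Relation.eq_of_reflTransGen_of_diamond
    (fun _ _ _ hv hw => Partition'.addRimHook_diamond (by omega) hv hw) h1 h2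
    (fun s hs => hq ⟨s, hs⟩) (fun s hs => hq' ⟨s, hs⟩)
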